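/- Let M ∈ ℝ^{n×m} with singular value decomposition, and let σ₁ ≥ σ₂ ≥ ... be its singular values. Then max { Tr(UᵀMV) : U ∈ ℝ^{n×c}, V ∈ ℝ^{m×c}, UᵀU + VᵀV = I } = (1/2)(σ₁ + σ₂ + ... + σ_c), attained at U = (√2/2) U_c, V = (√2/2) V_c where U_c, V_c are matrices of the top c left and right singular vectors. -/

import Mathlib

/-!
Replacing `U, V` by `P = U₀ᵀU`, `Q = V₀ᵀV` keeps the constraint `PᵀP + QᵀQ = 1` and turns the
objective into `∑ₐ σₐ ⟨pₐ, qₐ⟩`, where `pₐ, qₐ` are the `a`-th rows of `P, Q`. Because `[P; Q]` has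
orthonormal columns, `w = pₐ + qₐ` satisfies `‖w‖⁴ / 2 ≤ ⟨pₐ, w⟩² + ⟨qₐ, w⟩² ≤ ‖w‖²`, so
`⟨pₐ, qₐ⟩ ≤ ‖w‖² / 4 ≤ 1/2`; by AM–GM the positive parts of the `⟨pₐ, qₐ⟩` add up to at most
`(‖P‖² + ‖Q‖²) / 2 = c / 2`. Weights in `[0, 1/2]` of total mass `c / 2` against the decreasing `σ`
give at most half the sum of the `c` largest values (Abel summation).
-/

open Matrix Finset

section Gram

variable {ι κ k R : Type*} [Fintype ι] [Fintype κ] [Fintype k]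

theorem Matrix.two_mul_dotProduct_le [CommRing R] [LinearOrder R] [IsStrictOrderedRing R]
    (x y : k → R) : 2 * (x ⬝ᵥ y) ≤ x ⬝ᵥ x + y ⬝ᵥ y := by
  simp only [dotProduct, mul_sum, ← sum_add_distrib]
  gcongr with l
  nlinarith [sq_nonneg (x l - y l)]

theorem Matrix.sq_apply_le_dotProduct_self [CommRing R] [LinearOrder R] [IsStrictOrderedRing R]
    (x : ι → R) (i : ι) : x i ^ 2 ≤ x ⬝ᵥ x := by
  rw [sq]
  exact single_le_sum (f := fun i => x i * x i) (fun l _ => mul_self_nonneg (x l)) (mem_univ i)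

theorem Matrix.mulVec_dotProduct_mulVec_self [CommRing R] (A : Matrix ι k R) (x : k → R) :
    A *ᵥ x ⬝ᵥ A *ᵥ x = x ⬝ᵥ (Aᵀ * A) *ᵥ x := by
  rw [← mulVec_mulVec, dotProduct_mulVec x, vecMul_transpose]

theorem Matrix.sum_dotProduct_self_eq_trace [CommRing R] (A : Matrix ι k R) :
    ∑ i, A i ⬝ᵥ A i = trace (Aᵀ * A) := by
  rw [trace_mul_comm]
  rfl

theorem Matrix.trace_transpose_mul_mul [CommRing R] (P : Matrix ι k R) (D : Matrix ι κ R)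
    (Q : Matrix κ k R) : trace (Pᵀ * D * Q) = ∑ i, ∑ j, D i j * (P i ⬝ᵥ Q j) := by
  rw [trace_mul_cycle, trace_mul_comm]
  refine sum_congr rfl fun i _ => ?_
  simp only [Matrix.diag, mul_apply, transpose_apply, dotProduct, mul_comm (Q _ _)]

variable [DecidableEq k]

theorem Matrix.mulVec_dotProduct_self_add_eq [CommRing R] {P : Matrix ι k R} {Q : Matrix κ k R}
    (hPQ : Pᵀ * P + Qᵀ * Q = 1) (x : k → R) :
    P *ᵥ x ⬝ᵥ P *ᵥ x + Q *ᵥ x ⬝ᵥ Q *ᵥ x = x ⬝ᵥ x := by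
  rw [mulVec_dotProduct_mulVec_self, mulVec_dotProduct_mulVec_self, ← dotProduct_add,
    ← add_mulVec, hPQ, one_mulVec]

theorem Matrix.sum_dotProduct_self_add_eq_card [CommRing R] {P : Matrix ι k R}
    {Q : Matrix κ k R} (hPQ : Pᵀ * P + Qᵀ * Q = 1) :
    ∑ i, P i ⬝ᵥ P i + ∑ j, Q j ⬝ᵥ Q j = Fintype.card k := by
  rw [sum_dotProduct_self_eq_trace, sum_dotProduct_self_eq_trace, ← trace_add, hPQ, trace_one]

theorem Matrix.dotProduct_row_le_half {P : Matrix ι k ℝ} {Q : Matrix κ k ℝ}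
    (hPQ : Pᵀ * P + Qᵀ * Q = 1) (i : ι) (j : κ) : P i ⬝ᵥ Q j ≤ 1 / 2 := by
  set w := P i + Q j
  have hsplit : P i ⬝ᵥ w + Q j ⬝ᵥ w = w ⬝ᵥ w := by rw [← add_dotProduct]
  have hproj : (P i ⬝ᵥ w) ^ 2 + (Q j ⬝ᵥ w) ^ 2 ≤ w ⬝ᵥ w := by
    rw [← mulVec_dotProduct_self_add_eq hPQ w]
    exact add_le_add (sq_apply_le_dotProduct_self (P *ᵥ w) i)
      (sq_apply_le_dotProduct_self (Q *ᵥ w) j)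
  have hamgm := two_mul_dotProduct_le (P i) (Q j)
  have hw : w ⬝ᵥ w = P i ⬝ᵥ P i + 2 * (P i ⬝ᵥ Q j) + Q j ⬝ᵥ Q j := by
    simp only [w, add_dotProduct, dotProduct_add, dotProduct_comm (Q j) (P i)]
    ring
  nlinarith [sq_nonneg (P i ⬝ᵥ w - Q j ⬝ᵥ w)]

end Gram

theorem sum_range_mul_le_of_antitone {σ s : ℕ → ℝ} {w : ℝ} {c d : ℕ} (hcd : c ≤ d)
    (hσ : Antitone σ) (hσc : 0 ≤ σ c) (hs0 : ∀ a, 0 ≤ s a) (hsw : ∀ a, s a ≤ w)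
    (hsum : ∑ a ∈ range d, s a ≤ c * w) :
    ∑ a ∈ range d, σ a * s a ≤ w * ∑ a ∈ range c, σ a := by
  have htail : ∑ a ∈ Ico c d, (σ a - σ c) * s a ≤ 0 :=
    sum_nonpos fun a ha => mul_nonpos_of_nonpos_of_nonneg
      (sub_nonpos.2 (hσ (mem_Ico.1 ha).1)) (hs0 a)
  have hhead : ∑ a ∈ range c, (σ a - σ c) * s a ≤ ∑ a ∈ range c, (σ a - σ c) * w :=
    sum_le_sum fun a ha => mul_le_mul_of_nonneg_left (hsw a)
      (sub_nonneg.2 (hσ (mem_range.1 ha).le))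
  calc ∑ a ∈ range d, σ a * s a
      = ∑ a ∈ range d, (σ a - σ c) * s a + σ c * ∑ a ∈ range d, s a := by
        rw [mul_sum, ← sum_add_distrib]
        congr! 1
        ring
    _ ≤ ∑ a ∈ range c, (σ a - σ c) * w + σ c * (c * w) := by
        rw [← sum_range_add_sum_Ico _ hcd]
        gcongr
        linarith
    _ = w * ∑ a ∈ range c, σ a := by
        rw [← sum_mul, sum_sub_distrib, sum_const, card_range, nsmul_eq_mul]
        ring

def rectDiag {R : Type*} [Zero R] (n m : ℕ) (σ : ℕ → R) : Matrix (Fin n) (Fin m) R :=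
  of fun i j => if (i : ℕ) = j then σ i else 0

def rowOrZero {R κ : Type*} [Zero R] {n : ℕ} (P : Matrix (Fin n) κ R) (a : ℕ) : κ → R :=
  if h : a < n then P ⟨a, h⟩ else 0

theorem rowOrZero_val {R κ : Type*} [Zero R] {n : ℕ} (P : Matrix (Fin n) κ R) (i : Fin n) :
    rowOrZero P i = P i := by
  simp [rowOrZero]

theorem sum_range_rowOrZero {R κ M : Type*} [Zero R] [AddCommMonoid M] {n : ℕ}
    (P : Matrix (Fin n) κ R) (f : (κ → R) → M) :
    ∑ a ∈ range n, f (rowOrZero P a) = ∑ i, f (P i) := by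
  rw [← Fin.sum_univ_eq_sum_range]
  simp only [rowOrZero_val]

theorem trace_transpose_mul_rectDiag_mul {R k : Type*} [CommRing R] [Fintype k] {n m : ℕ}
    (σ : ℕ → R) (P : Matrix (Fin n) k R) (Q : Matrix (Fin m) k R) :
    trace (Pᵀ * rectDiag n m σ * Q)
      = ∑ a ∈ range (min n m), σ a * (rowOrZero P a ⬝ᵥ rowOrZero Q a) := by
  set f : ℕ → R := fun a => σ a * (rowOrZero P a ⬝ᵥ rowOrZero Q a)
  have hentry (i : Fin n) (j : Fin m) :
      rectDiag n m σ i j * (P i ⬝ᵥ Q j) = if (i : ℕ) = j then f j else 0 := by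
    obtain ⟨a, ha⟩ := i
    obtain ⟨b, hb⟩ := j
    by_cases hab : a = b
    · subst hab
      simp [rectDiag, f, rowOrZero, ha, hb]
    · simp [rectDiag, hab]
  have hrow (a : ℕ) :
      ∑ j : Fin m, (if a = j then f j else 0) = if a ∈ range m then f a else 0 := by
    rw [Fin.sum_univ_eq_sum_range (fun b => if a = b then f b else 0), sum_ite_eq]
  rw [trace_transpose_mul_mul]
  simp only [hentry, hrow]
  rw [Fin.sum_univ_eq_sum_range (fun a => if a ∈ range m then f a else 0), sum_ite_mem,
    range_inter_range]

theorem trace_transpose_mul_rectDiag_mul_le {n m c : ℕ} (hcn : c ≤ n) (hcm : c ≤ m)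
    {σ : ℕ → ℝ} (hσ : Antitone σ) (hσ0 : ∀ a, 0 ≤ σ a)
    {P : Matrix (Fin n) (Fin c) ℝ} {Q : Matrix (Fin m) (Fin c) ℝ} (hPQ : Pᵀ * P + Qᵀ * Q = 1) :
    trace (Pᵀ * rectDiag n m σ * Q) ≤ 1 / 2 * ∑ a ∈ range c, σ a := by
  set p := rowOrZero P
  set q := rowOrZero Q
  have hhalf (a : ℕ) : p a ⬝ᵥ q a ≤ 1 / 2 := by
    by_cases ha : a < n ∧ a < m
    · simpa [p, q, rowOrZero, ha.1, ha.2] using dotProduct_row_le_half hPQ ⟨a, ha.1⟩ ⟨a, ha.2⟩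
    · rcases not_and_or.1 ha with h | h <;> simp [p, q, rowOrZero, h]
  have hsq_nonneg (x : Fin c → ℝ) : 0 ≤ x ⬝ᵥ x := sum_nonneg fun l _ => mul_self_nonneg (x l)
  have hmass : ∑ a ∈ range (min n m), max (p a ⬝ᵥ q a) 0 ≤ c * (1 / 2) := by
    calc ∑ a ∈ range (min n m), max (p a ⬝ᵥ q a) 0
        ≤ ∑ a ∈ range (min n m), (p a ⬝ᵥ p a + q a ⬝ᵥ q a) / 2 := by
          gcongr with a
          exact max_le (by linarith [two_mul_dotProduct_le (p a) (q a)])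
            (by linarith [hsq_nonneg (p a), hsq_nonneg (q a)])
      _ = (∑ a ∈ range (min n m), p a ⬝ᵥ p a + ∑ a ∈ range (min n m), q a ⬝ᵥ q a) / 2 := by
          rw [← sum_div, sum_add_distrib]
      _ ≤ (∑ a ∈ range n, p a ⬝ᵥ p a + ∑ a ∈ range m, q a ⬝ᵥ q a) / 2 := by
          gcongr (?_ + ?_) / 2
          · exact sum_le_sum_of_subset_of_nonneg (range_mono (min_le_left n m))
              fun a _ _ => hsq_nonneg (p a)
          · exact sum_le_sum_of_subset_of_nonneg (range_mono (min_le_right n m))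
              fun a _ _ => hsq_nonneg (q a)
      _ = c * (1 / 2) := by
          rw [sum_range_rowOrZero P (fun x => x ⬝ᵥ x), sum_range_rowOrZero Q (fun x => x ⬝ᵥ x),
            sum_dotProduct_self_add_eq_card hPQ, Fintype.card_fin]
          ring
  rw [trace_transpose_mul_rectDiag_mul]
  calc ∑ a ∈ range (min n m), σ a * (p a ⬝ᵥ q a)
      ≤ ∑ a ∈ range (min n m), σ a * max (p a ⬝ᵥ q a) 0 := by
        gcongr with a
        · exact hσ0 a
        · exact le_max_left _ _
    _ ≤ 1 / 2 * ∑ a ∈ range c, σ a :=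
        sum_range_mul_le_of_antitone (le_min hcn hcm) hσ (hσ0 c) (fun a => le_max_right _ _)
          (fun a => max_le (hhalf a) (by norm_num)) hmass

theorem Matrix.transpose_mul_self_transpose_mul_of_orthogonal {ι k R : Type*} [Fintype ι]
    [DecidableEq ι] [CommRing R] {O : Matrix ι ι R} (hO : Oᵀ * O = 1) (U : Matrix ι k R) :
    (Oᵀ * U)ᵀ * (Oᵀ * U) = Uᵀ * U := by
  rw [transpose_mul, transpose_transpose, Matrix.mul_assoc, ← Matrix.mul_assoc O,
    mul_eq_one_comm.1 hO, Matrix.one_mul]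

theorem Matrix.transpose_submatrix_mul_mul_submatrix {ι κ k l m R : Type*} [Fintype ι] [Fintype κ]
    [CommRing R] (U : Matrix ι k R) (M : Matrix ι κ R) (V : Matrix κ l R) (f : m → k) (g : m → l) :
    (U.submatrix id f)ᵀ * M * V.submatrix id g = (Uᵀ * M * V).submatrix f g := by
  rw [transpose_submatrix, submatrix_mul _ _ f id g Function.bijective_id,
    submatrix_mul _ _ f id id Function.bijective_id]
  rfl

theorem Matrix.transpose_submatrix_mul_self_eq_one {ι k l R : Type*} [Fintype ι] [DecidableEq k]
    [DecidableEq l] [CommRing R] {U : Matrix ι k R} (hU : Uᵀ * U = 1) {f : l → k}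
    (hf : Function.Injective f) : (U.submatrix id f)ᵀ * U.submatrix id f = 1 := by
  rw [transpose_submatrix, ← submatrix_mul _ _ f id f Function.bijective_id, hU, submatrix_one f hf]

theorem trace_rectDiag_submatrix_castLE {R : Type*} [AddCommMonoid R] {n m c : ℕ} (hcn : c ≤ n)
    (hcm : c ≤ m) (σ : ℕ → R) :
    trace ((rectDiag n m σ).submatrix (Fin.castLE hcn) (Fin.castLE hcm)) = ∑ a ∈ range c, σ a := by
  simp [trace, rectDiag, Fin.sum_univ_eq_sum_range]

/-- Ky Fan-type result: the maximum of `Tr(UᵀMV)` subject to `UᵀU + VᵀV = I` is half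
the sum of the top `c` singular values, attained at `(√2/2)·U_c, (√2/2)·V_c`. -/
theorem stmt_8 (n m c : ℕ) (hcn : c ≤ n) (hcm : c ≤ m)
    (M : Matrix (Fin n) (Fin m) ℝ)
    (σ : ℕ → ℝ) (hσ_dec : ∀ i j, i ≤ j → σ j ≤ σ i) (hσ_nn : ∀ i, 0 ≤ σ i)
    (U0 : Matrix (Fin n) (Fin n) ℝ) (V0 : Matrix (Fin m) (Fin m) ℝ)
    (hU0 : U0ᵀ * U0 = 1) (hV0 : V0ᵀ * V0 = 1)
    (hSVD : M = U0 * (Matrix.of fun (i : Fin n) (j : Fin m) =>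
        if (i : ℕ) = (j : ℕ) then σ i else 0) * V0ᵀ) :
    IsGreatest
      {t : ℝ | ∃ (U : Matrix (Fin n) (Fin c) ℝ) (V : Matrix (Fin m) (Fin c) ℝ),
          Uᵀ * U + Vᵀ * V = 1 ∧ t = Matrix.trace (Uᵀ * M * V)}
      ((1 / 2) * ∑ i ∈ Finset.range c, σ i) ∧
    (((Real.sqrt 2 / 2) • U0.submatrix id (Fin.castLE hcn))ᵀ
        * ((Real.sqrt 2 / 2) • U0.submatrix id (Fin.castLE hcn))
      + ((Real.sqrt 2 / 2) • V0.submatrix id (Fin.castLE hcm))ᵀ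
        * ((Real.sqrt 2 / 2) • V0.submatrix id (Fin.castLE hcm)) = 1 ∧
     Matrix.trace (((Real.sqrt 2 / 2) • U0.submatrix id (Fin.castLE hcn))ᵀ * M
        * ((Real.sqrt 2 / 2) • V0.submatrix id (Fin.castLE hcm)))
       = (1 / 2) * ∑ i ∈ Finset.range c, σ i) := by
  change M = U0 * rectDiag n m σ * V0ᵀ at hSVD
  set r := Real.sqrt 2 / 2
  set A := U0.submatrix id (Fin.castLE hcn)
  set B := V0.submatrix id (Fin.castLE hcm)
  have hr : r * r = 1 / 2 := by
    rw [div_mul_div_comm, Real.mul_self_sqrt zero_le_two]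
    norm_num
  have hfeasible : (r • A)ᵀ * (r • A) + (r • B)ᵀ * (r • B) = 1 := by
    rw [transpose_smul, transpose_smul, smul_mul, smul_mul, Matrix.mul_smul, Matrix.mul_smul,
      transpose_submatrix_mul_self_eq_one hU0 (Fin.castLE_injective hcn),
      transpose_submatrix_mul_self_eq_one hV0 (Fin.castLE_injective hcm), smul_smul, hr,
      ← add_smul]
    norm_num
  have hcore : U0ᵀ * M * V0 = rectDiag n m σ := by
    rw [hSVD, ← Matrix.mul_assoc, ← Matrix.mul_assoc, hU0, Matrix.one_mul, Matrix.mul_assoc, hV0,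
      Matrix.mul_one]
  have hvalue : trace ((r • A)ᵀ * M * (r • B)) = 1 / 2 * ∑ i ∈ range c, σ i := by
    rw [transpose_smul, smul_mul, smul_mul, Matrix.mul_smul, trace_smul, trace_smul, smul_smul, hr,
      transpose_submatrix_mul_mul_submatrix, hcore, trace_rectDiag_submatrix_castLE, smul_eq_mul]
  refine ⟨⟨⟨_, _, hfeasible, hvalue.symm⟩, ?_⟩, hfeasible, hvalue⟩
  rintro _ ⟨U, V, hUV, rfl⟩
  have hPQ : (U0ᵀ * U)ᵀ * (U0ᵀ * U) + (V0ᵀ * V)ᵀ * (V0ᵀ * V) = 1 := by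
    rwa [transpose_mul_self_transpose_mul_of_orthogonal hU0,
      transpose_mul_self_transpose_mul_of_orthogonal hV0]
  have hrot : Uᵀ * M * V = (U0ᵀ * U)ᵀ * rectDiag n m σ * (V0ᵀ * V) := by
    simp only [hSVD, transpose_mul, transpose_transpose, Matrix.mul_assoc]
  rw [hrot]
  exact trace_transpose_mul_rectDiag_mul_le hcn hcm hσ_dec hσ_nn hPQ
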